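/- arXiv:math-ph/0511036 — 3 statements merged into one kernel-verified Lean document; each statement's English description precedes it below -/
import Mathlib

section
/- Stone–von Neumann theorem: there exists an irreducible finite-dimensional complex representation (π, H) of the Heisenberg group H(V,ω) whose restriction to the center Z(H) acts by the character ψ (i.e., π(0,z) = ψ(z)·Id for all z ∈ F_q), and any two irreducible complex representations of H(V,ω) with central character ψ are isomorphic. -/
/-!
Stone–von Neumann theorem for the Heisenberg group `H(V,ω)` attached to a
`2n`-dimensional symplectic vector space `(V,ω)` over a finite field `F` of odd
cardinality `q`, with a fixed nontrivial additive character `ψ : F → ℂ×`: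
there exists an irreducible finite-dimensional complex representation with
central character `ψ`, and any two such are isomorphic.
-/

noncomputable section
set_option linter.unusedSectionVars false

namespace KRSup

variable (F V : Type) [Field F] [Fintype F] [AddCommGroup V] [Module F V]

/-- Heisenberg group multiplication on `H = V × F`:
`(v,z)·(v',z') = (v+v', z+z'+½ω(v,v'))`. -/
def hMul (ω : LinearMap.BilinForm F V) (h h' : V × F) : V × F :=
  (h.1 + h'.1, h.2 + h'.2 + (2 : F)⁻¹ * ω h.1 h'.1)

/-- An irreducible finite-dimensional complex representation of the Heisenberg group
`H(V,ω)` with central character `ψ`. -/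
structure HeisenbergRep (ω : LinearMap.BilinForm F V) (ψ : AddChar F ℂ) where
  /-- the underlying complex vector space -/
  carrier : Type
  [acg : AddCommGroup carrier]
  [mod : Module ℂ carrier]
  [fd : FiniteDimensional ℂ carrier]
  /-- the action of the Heisenberg group -/
  π : V × F → (carrier →ₗ[ℂ] carrier)
  π_mul : ∀ h h' : V × F, π (hMul F V ω h h') = (π h).comp (π h')
  π_one : π ((0 : V), (0 : F)) = LinearMap.id
  nontriv : ∃ w : carrier, w ≠ 0
  /-- the restriction to the center `Z(H) = {(0,z)}` acts by the character `ψ` -/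
  central : ∀ z : F, π ((0 : V), z) = ψ z • LinearMap.id
  /-- irreducibility: no nontrivial invariant subspaces -/
  irred : ∀ U : Submodule ℂ carrier, (∀ h : V × F, ∀ w ∈ U, π h w ∈ U) → U = ⊥ ∨ U = ⊤

attribute [instance] HeisenbergRep.acg HeisenbergRep.mod HeisenbergRep.fd

section Aux
variable {F V}
variable {ω : LinearMap.BilinForm F V} {ψ : AddChar F ℂ}

lemma antisym (halt : ∀ v : V, ω v v = 0) (a b : V) : ω a b = - ω b a := by
  have h := halt (a + b)
  simp only [map_add, LinearMap.add_apply, halt a, halt b, zero_add, add_zero] at h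
  linear_combination h

lemma two_ne (hq : Odd (Fintype.card F)) : (2 : F) ≠ 0 := by
  intro h2
  have : ringChar F = 2 := by
    have h := (CharP.cast_eq_zero_iff F (ringChar F) 2).mp (by exact_mod_cast h2)
    have hp : Nat.Prime (ringChar F) := CharP.char_is_prime F (ringChar F)
    exact (Nat.prime_dvd_prime_iff_eq hp Nat.prime_two).mp h
  have h4 := (FiniteField.even_card_iff_char_two).mp this
  obtain ⟨k, hk⟩ := hq
  omega

lemma pi_comp (P : HeisenbergRep F V ω ψ) (h h' : V × F) :
    (P.π h).comp (P.π h') = P.π (hMul F V ω h h') := (P.π_mul h h').symm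

lemma pi_smul (P : HeisenbergRep F V ω ψ) (v : V) (z : F) :
    P.π (v, z) = ψ z • P.π (v, 0) := by
  have h : hMul F V ω ((0 : V), z) (v, (0 : F)) = (v, z) := by
    simp [hMul]
  rw [← h, P.π_mul, P.central]
  ext w
  simp

lemma sum_psi_eq_zero (halt : ∀ v : V, ω v v = 0)
    (hnd : ∀ v : V, (∀ u : V, ω v u = 0) → v = 0) (hψ : ψ ≠ 1)
    [Fintype V] {w : V} (hw : w ≠ 0) :
    ∑ u : V, ψ (ω u w) = 0 := by
  -- find u₀ with ψ (ω u₀ w) ≠ 1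
  obtain ⟨t₀, ht₀⟩ : ∃ t : F, ψ t ≠ 1 := AddChar.ne_one_iff.mp hψ
  obtain ⟨u₁, hu₁⟩ : ∃ u : V, ω w u ≠ 0 := by
    by_contra hall
    push_neg at hall
    exact hw (hnd w hall)
  have hu₁' : ω u₁ w ≠ 0 := by
    rw [antisym halt u₁ w]
    simpa using hu₁
  set u₀ : V := (t₀ * (ω u₁ w)⁻¹) • u₁ with hu₀
  have hval : ω u₀ w = t₀ := by
    simp [hu₀, LinearMap.map_smul, smul_eq_mul]
    field_simp
  have key : ∑ u : V, ψ (ω u w) = ψ t₀ * ∑ u : V, ψ (ω u w) := by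
    calc ∑ u : V, ψ (ω u w) = ∑ u : V, ψ (ω (u + u₀) w) := by
          exact (Fintype.sum_equiv (Equiv.addRight u₀)
            (fun u => ψ (ω (u + u₀) w)) (fun u => ψ (ω u w)) (fun u => rfl)).symm
      _ = ∑ u : V, ψ t₀ * ψ (ω u w) := by
          refine Finset.sum_congr rfl fun u _ => ?_
          rw [map_add, LinearMap.add_apply, hval, add_comm, AddChar.map_add_eq_mul]
      _ = ψ t₀ * ∑ u : V, ψ (ω u w) := by rw [Finset.mul_sum]
  have : (ψ t₀ - 1) * ∑ u : V, ψ (ω u w) = 0 := by ring_nf; linear_combination -key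
  rcases mul_eq_zero.mp this with h | h
  · exact absurd (by linear_combination h) ht₀
  · exact h

end Aux

section Aux2
variable {F V : Type} [Field F] [Fintype F] [AddCommGroup V] [Module F V]
variable {ω : LinearMap.BilinForm F V} {ψ : AddChar F ℂ}

lemma hMul_pair (v v' : V) :
    hMul F V ω (v, (0:F)) (v', (0:F)) = (v + v', (2:F)⁻¹ * ω v v') := by
  simp [hMul]

lemma pi_pair (P : HeisenbergRep F V ω ψ) (v v' : V) :
    P.π (v, 0) * P.π (v', 0) = ψ ((2:F)⁻¹ * ω v v') • P.π (v + v', 0) := by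
  have := pi_comp P (v, (0:F)) (v', (0:F))
  rw [Module.End.mul_eq_comp, this, hMul_pair, pi_smul]

lemma hMul_conj (halt : ∀ v : V, ω v v = 0) (h2 : (2:F) ≠ 0) (u w : V) :
    hMul F V ω (u, (0:F)) (hMul F V ω (w, (0:F)) (-u, (0:F))) = (w, ω u w) := by
  have h1 := antisym halt w u
  rw [Prod.ext_iff]
  constructor
  · simp [hMul]
  · simp only [hMul, map_add, map_neg, LinearMap.add_apply, LinearMap.neg_apply]
    rw [h1, halt u]
    have hinv : (2:F)⁻¹ * 2 = 1 := inv_mul_cancel₀ h2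
    linear_combination (ω u w) * hinv

lemma pi_conj (halt : ∀ v : V, ω v v = 0) (h2 : (2:F) ≠ 0)
    (P : HeisenbergRep F V ω ψ) (u w : V) :
    P.π (u, 0) * (P.π (w, 0) * P.π (-u, 0)) = ψ (ω u w) • P.π (w, 0) := by
  rw [Module.End.mul_eq_comp, Module.End.mul_eq_comp, pi_comp, pi_comp,
    hMul_conj halt h2, pi_smul]

lemma indep (halt : ∀ v : V, ω v v = 0)
    (hnd : ∀ v : V, (∀ u : V, ω v u = 0) → v = 0) (hψ : ψ ≠ 1)
    (h2 : (2:F) ≠ 0) [Fintype V] (P : HeisenbergRep F V ω ψ) (c : V → ℂ)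
    (hc : ∑ v : V, c v • P.π (v, 0) = 0) (v₀ : V) : c v₀ = 0 := by
  classical
  have hterm : ∀ u v : V,
      P.π (u,0) * (c v • P.π (v,0) * (P.π (-v₀,0) * P.π (-u,0)))
        = (c v * (ψ ((2:F)⁻¹ * ω v (-v₀)) * ψ (ω u (v + -v₀)))) • P.π (v + -v₀, 0) := by
    intro u v
    calc P.π (u,0) * (c v • P.π (v,0) * (P.π (-v₀,0) * P.π (-u,0)))
        = c v • (P.π (u,0) * (P.π (v,0) * P.π (-v₀,0) * P.π (-u,0))) := by
          rw [smul_mul_assoc, mul_smul_comm, mul_assoc]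
      _ = c v • (ψ ((2:F)⁻¹ * ω v (-v₀)) • (P.π (u,0) * (P.π (v + -v₀, 0) * P.π (-u,0)))) := by
          rw [pi_pair, smul_mul_assoc, mul_smul_comm]
      _ = c v • (ψ ((2:F)⁻¹ * ω v (-v₀)) • (ψ (ω u (v + -v₀)) • P.π (v + -v₀, 0))) := by
          rw [pi_conj halt h2]
      _ = (c v * (ψ ((2:F)⁻¹ * ω v (-v₀)) * ψ (ω u (v + -v₀)))) • P.π (v + -v₀, 0) := by
          rw [smul_smul, smul_smul, mul_assoc]
  have key : ∑ u : V, P.π (u,0) * ((∑ v : V, c v • P.π (v,0)) * (P.π (-v₀,0) * P.π (-u,0)))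
      = ((Fintype.card V : ℂ) * c v₀) • P.π ((0:V), (0:F)) := by
    have step1 : ∀ u : V,
        P.π (u,0) * ((∑ v : V, c v • P.π (v,0)) * (P.π (-v₀,0) * P.π (-u,0)))
          = ∑ v : V, (c v * (ψ ((2:F)⁻¹ * ω v (-v₀)) * ψ (ω u (v + -v₀)))) • P.π (v + -v₀, 0) := by
      intro u
      rw [Finset.sum_mul, Finset.mul_sum]
      exact Finset.sum_congr rfl fun v _ => hterm u v
    rw [Finset.sum_congr rfl fun u _ => step1 u, Finset.sum_comm]
    rw [Finset.sum_eq_single v₀]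
    · have hz : v₀ + -v₀ = (0:V) := by abel
      have hω : ∀ u : V, ω u (v₀ + -v₀) = 0 := by
        intro u; rw [hz]; exact map_zero (ω u)
      have hA : (2:F)⁻¹ * ω v₀ (-v₀) = 0 := by
        rw [map_neg, halt v₀]; ring
      calc ∑ u : V, (c v₀ * (ψ ((2:F)⁻¹ * ω v₀ (-v₀)) * ψ (ω u (v₀ + -v₀)))) • P.π (v₀ + -v₀, 0)
          = ∑ _u : V, c v₀ • P.π ((0:V), (0:F)) := by
            refine Finset.sum_congr rfl fun u _ => ?_
            rw [hω u, hA, AddChar.map_zero_eq_one, hz, one_mul, mul_one]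
        _ = ((Fintype.card V : ℂ) * c v₀) • P.π ((0:V), (0:F)) := by
            rw [Finset.sum_const, Finset.card_univ, ← Nat.cast_smul_eq_nsmul ℂ, smul_smul]
    · intro v _ hv
      have hvne : v + -v₀ ≠ 0 := by
        intro h; exact hv (by linear_combination (norm := abel) h)
      have hsum : ∑ u : V, ψ (ω u (v + -v₀)) = 0 := sum_psi_eq_zero halt hnd hψ hvne
      calc ∑ u : V, (c v * (ψ ((2:F)⁻¹ * ω v (-v₀)) * ψ (ω u (v + -v₀)))) • P.π (v + -v₀, 0)
          = ∑ u : V, ((c v * ψ ((2:F)⁻¹ * ω v (-v₀))) * ψ (ω u (v + -v₀))) • P.π (v + -v₀, 0) := by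
            refine Finset.sum_congr rfl fun u _ => by rw [mul_assoc]
        _ = ((c v * ψ ((2:F)⁻¹ * ω v (-v₀))) * ∑ u : V, ψ (ω u (v + -v₀))) • P.π (v + -v₀, 0) := by
            rw [Finset.mul_sum, Finset.sum_smul]
        _ = 0 := by rw [hsum, mul_zero, zero_smul]
    · intro h; exact absurd (Finset.mem_univ v₀) h
  rw [hc] at key
  simp only [mul_zero, zero_mul, Finset.sum_const_zero] at key
  obtain ⟨w, hw⟩ := P.nontriv
  have := congrArg (fun f : P.carrier →ₗ[ℂ] P.carrier => f w) key.symm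
  simp only [LinearMap.smul_apply, P.π_one, LinearMap.id_apply, LinearMap.zero_apply] at this
  rcases smul_eq_zero.mp this with h | h
  · rcases mul_eq_zero.mp h with h' | h'
    · exact absurd h' (Nat.cast_ne_zero.mpr Fintype.card_ne_zero)
    · exact h'
  · exact absurd h hw

end Aux2

section Aux3
variable {F V : Type} [Field F] [Fintype F] [AddCommGroup V] [Module F V]
variable {ω : LinearMap.BilinForm F V} {ψ : AddChar F ℂ}

lemma T_intertwines (halt : ∀ v : V, ω v v = 0) (h2 : (2:F) ≠ 0) [Fintype V]
    (P Q : HeisenbergRep F V ω ψ)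
    (lam : Module.Dual ℂ P.carrier) (w₀ : Q.carrier) (u : V) (t : F) (x : P.carrier) :
    ∑ v : V, lam (P.π (-v, 0) (P.π (u, t) x)) • Q.π (v, 0) w₀
      = Q.π (u, t) (∑ v : V, lam (P.π (-v, 0) x) • Q.π (v, 0) w₀) := by
  classical
  have hA : ∀ v' : V, hMul F V ω (-(v' + u), (0:F)) (u, t) = (-v', t + -((2:F)⁻¹ * ω v' u)) := by
    intro v'
    rw [Prod.ext_iff]
    constructor
    · show -(v' + u) + u = -v'
      abel
    · show (0:F) + t + (2:F)⁻¹ * ω (-(v' + u)) u = t + -((2:F)⁻¹ * ω v' u)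
      simp only [map_add, map_neg, LinearMap.add_apply, LinearMap.neg_apply, halt u]
      ring
  calc ∑ v : V, lam (P.π (-v, 0) (P.π (u, t) x)) • Q.π (v, 0) w₀
      = ∑ v' : V, lam (P.π (-(v' + u), 0) (P.π (u, t) x)) • Q.π (v' + u, 0) w₀ := by
        exact (Fintype.sum_equiv (Equiv.addRight u)
          (fun v' => lam (P.π (-(v' + u), 0) (P.π (u, t) x)) • Q.π (v' + u, 0) w₀)
          (fun v => lam (P.π (-v, 0) (P.π (u, t) x)) • Q.π (v, 0) w₀)
          (fun v' => rfl)).symm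
    _ = ∑ v' : V, (ψ t * lam (P.π (-v', 0) x)) • Q.π (u, 0) (Q.π (v', 0) w₀) := by
        refine Finset.sum_congr rfl fun v' _ => ?_
        have e1 : P.π (-(v' + u), (0:F)) (P.π (u, t) x)
            = ψ (t + -((2:F)⁻¹ * ω v' u)) • P.π (-v', 0) x := by
          calc P.π (-(v' + u), (0:F)) (P.π (u, t) x)
              = ((P.π (-(v' + u), (0:F))).comp (P.π (u, t))) x := rfl
            _ = P.π (hMul F V ω (-(v' + u), (0:F)) (u, t)) x := by rw [pi_comp]
            _ = ψ (t + -((2:F)⁻¹ * ω v' u)) • P.π (-v', 0) x := by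
                rw [hA v', pi_smul]; rfl
        have e2 : Q.π (v' + u, (0:F)) w₀
            = ψ (-((2:F)⁻¹ * ω u v')) • Q.π (u, 0) (Q.π (v', 0) w₀) := by
          have hp : Q.π (u + v', (0:F))
              = ψ (-((2:F)⁻¹ * ω u v')) • (Q.π (u, 0) * Q.π (v', 0)) := by
            rw [pi_pair Q u v', smul_smul, ← AddChar.map_add_eq_mul]
            simp
          rw [add_comm v' u, hp]
          rfl
        have hψt : ψ (t + -((2:F)⁻¹ * ω v' u)) * ψ (-((2:F)⁻¹ * ω u v')) = ψ t := by
          rw [← AddChar.map_add_eq_mul]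
          congr 1
          linear_combination (-((2:F)⁻¹)) * antisym halt u v'
        calc lam (P.π (-(v' + u), 0) (P.π (u, t) x)) • Q.π (v' + u, 0) w₀
            = (ψ (t + -((2:F)⁻¹ * ω v' u)) * lam (P.π (-v', 0) x))
                • (ψ (-((2:F)⁻¹ * ω u v')) • Q.π (u, 0) (Q.π (v', 0) w₀)) := by
              rw [e1, e2, map_smul, smul_eq_mul]
          _ = ((ψ (t + -((2:F)⁻¹ * ω v' u)) * ψ (-((2:F)⁻¹ * ω u v')))
                * lam (P.π (-v', 0) x)) • Q.π (u, 0) (Q.π (v', 0) w₀) := by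
              rw [smul_smul, mul_right_comm]
          _ = (ψ t * lam (P.π (-v', 0) x)) • Q.π (u, 0) (Q.π (v', 0) w₀) := by rw [hψt]
    _ = Q.π (u, t) (∑ v : V, lam (P.π (-v, 0) x) • Q.π (v, 0) w₀) := by
        rw [pi_smul Q u t, LinearMap.smul_apply, map_sum, Finset.smul_sum]
        exact (Finset.sum_congr rfl fun v _ => by rw [map_smul, smul_smul]).symm

end Aux3

section Aux4
variable {F V : Type} [Field F] [Fintype F] [AddCommGroup V] [Module F V]
variable {ω : LinearMap.BilinForm F V} {ψ : AddChar F ℂ}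

lemma exists_equiv (halt : ∀ v : V, ω v v = 0)
    (hnd : ∀ v : V, (∀ u : V, ω v u = 0) → v = 0) (hψ : ψ ≠ 1)
    (h2 : (2:F) ≠ 0) [Fintype V] (P Q : HeisenbergRep F V ω ψ) :
    ∃ e : P.carrier ≃ₗ[ℂ] Q.carrier,
      ∀ (h : V × F) (w : P.carrier), e (P.π h w) = Q.π h (e w) := by
  classical
  obtain ⟨x₀, hx₀⟩ := P.nontriv
  obtain ⟨lam, hlam⟩ : ∃ lam : Module.Dual ℂ P.carrier, lam x₀ ≠ 0 := by
    by_contra hall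
    push_neg at hall
    exact hx₀ ((Module.forall_dual_apply_eq_zero_iff ℂ x₀).mp fun φ => hall φ)
  set c : V → ℂ := fun v => lam (P.π (-v, 0) x₀) with hc
  have hc0 : c 0 = lam x₀ := by
    simp only [hc, neg_zero]
    rw [P.π_one]
    rfl
  have hS : ∑ v : V, c v • Q.π (v, 0) ≠ 0 := by
    intro h0
    exact hlam (hc0 ▸ indep halt hnd hψ h2 Q c h0 0)
  obtain ⟨w₀, hw₀⟩ : ∃ w₀ : Q.carrier, (∑ v : V, c v • Q.π (v, 0)) w₀ ≠ 0 := by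
    by_contra hall
    push_neg at hall
    exact hS (LinearMap.ext fun w => hall w)
  set T : P.carrier →ₗ[ℂ] Q.carrier :=
    ∑ v : V, ((LinearMap.toSpanSingleton ℂ Q.carrier (Q.π (v, 0) w₀)).comp
      (lam.comp (P.π (-v, 0)))) with hT
  have hTapp : ∀ x : P.carrier, T x = ∑ v : V, lam (P.π (-v, 0) x) • Q.π (v, 0) w₀ := by
    intro x
    rw [hT]
    simp [LinearMap.sum_apply, LinearMap.toSpanSingleton_apply]
  have hint : ∀ (h : V × F) (x : P.carrier), T (P.π h x) = Q.π h (T x) := by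
    rintro ⟨u, t⟩ x
    rw [hTapp, hTapp]
    exact T_intertwines halt h2 P Q lam w₀ u t x
  have hTne : T ≠ 0 := by
    intro h0
    apply hw₀
    have := hTapp x₀
    rw [h0] at this
    simp only [LinearMap.zero_apply] at this
    rw [LinearMap.sum_apply]
    simp only [LinearMap.smul_apply]
    exact this.symm
  have hinj : Function.Injective T := by
    rw [← LinearMap.ker_eq_bot]
    rcases P.irred (LinearMap.ker T) (fun h w hw => by
      rw [LinearMap.mem_ker, hint h w, LinearMap.mem_ker.mp hw, map_zero]) with h | h
    · exact h
    · exact absurd (LinearMap.ker_eq_top.mp h) hTne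
  have hsurj : Function.Surjective T := by
    rw [← LinearMap.range_eq_top]
    rcases Q.irred (LinearMap.range T) (fun h w hw => by
      obtain ⟨x, hx⟩ := LinearMap.mem_range.mp hw
      exact LinearMap.mem_range.mpr ⟨P.π h x, by rw [hint h x, hx]⟩) with h | h
    · exfalso
      apply hTne
      rw [← LinearMap.range_eq_bot]
      exact h
    · exact h
  refine ⟨LinearEquiv.ofBijective T ⟨hinj, hsurj⟩, fun h w => ?_⟩
  exact hint h w

end Aux4

section Exist
variable {F V : Type} [Field F] [Fintype F] [AddCommGroup V] [Module F V]
variable (ω : LinearMap.BilinForm F V) (ψ : AddChar F ℂ)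

/-- The big Schrödinger-type representation on functions `V → ℂ`. -/
def bigPi (h : V × F) : (V → ℂ) →ₗ[ℂ] (V → ℂ) where
  toFun f := fun u => ψ (h.2 + (2:F)⁻¹ * ω u h.1) * f (u + h.1)
  map_add' f g := by funext u; simp [mul_add]
  map_smul' c f := by funext u; simp [smul_eq_mul]; ring

lemma bigPi_apply (h : V × F) (f : V → ℂ) (u : V) :
    bigPi ω ψ h f u = ψ (h.2 + (2:F)⁻¹ * ω u h.1) * f (u + h.1) := rfl

lemma bigPi_mul (h h' : V × F) :
    bigPi ω ψ (hMul F V ω h h') = (bigPi ω ψ h).comp (bigPi ω ψ h') := by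
  refine LinearMap.ext fun f => funext fun u => ?_
  simp only [LinearMap.comp_apply, bigPi_apply, hMul]
  rw [← mul_assoc, ← AddChar.map_add_eq_mul]
  congr 1
  · congr 1
    simp only [map_add, LinearMap.add_apply]
    ring
  · congr 1
    abel

lemma bigPi_one : bigPi ω ψ ((0:V), (0:F)) = LinearMap.id := by
  refine LinearMap.ext fun f => funext fun u => ?_
  simp [bigPi_apply]

lemma bigPi_central (z : F) : bigPi ω ψ ((0:V), z) = ψ z • LinearMap.id := by
  refine LinearMap.ext fun f => funext fun u => ?_
  simp [bigPi_apply, smul_eq_mul]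

end Exist


/-- **Stone–von Neumann theorem**: there exists an irreducible finite-dimensional
complex representation of `H(V,ω)` with central character `ψ`, and any two
irreducible representations with central character `ψ` are isomorphic. -/
theorem stone_von_neumann
    (n : ℕ) [FiniteDimensional F V] (hdim : Module.finrank F V = 2 * n)
    (hq : Odd (Fintype.card F))
    (ω : LinearMap.BilinForm F V)
    (halt : ∀ v : V, ω v v = 0)
    (hnd : ∀ v : V, (∀ u : V, ω v u = 0) → v = 0)
    (ψ : AddChar F ℂ) (hψ : ψ ≠ 1) :
    Nonempty (HeisenbergRep F V ω ψ) ∧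
      ∀ P Q : HeisenbergRep F V ω ψ,
        ∃ e : P.carrier ≃ₗ[ℂ] Q.carrier,
          ∀ (h : V × F) (w : P.carrier), e (P.π h w) = Q.π h (e w) := by
  classical
  have h2 : (2 : F) ≠ 0 := two_ne hq
  have hfin : Finite V := Module.finite_of_finite F
  letI : Fintype V := Fintype.ofFinite V
  constructor
  · -- existence
    set Inv : Submodule ℂ (V → ℂ) → Prop :=
      fun U => U ≠ ⊥ ∧ ∀ (h : V × F) (w : V → ℂ), w ∈ U → bigPi ω ψ h w ∈ U with hInv
    have hTop : Inv ⊤ := by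
      constructor
      · refine Submodule.ne_bot_iff _ |>.mpr ⟨1, Submodule.mem_top, one_ne_zero⟩
      · intro _ _ _; exact Submodule.mem_top
    have hex : ∃ k : ℕ, ∃ U : Submodule ℂ (V → ℂ), Inv U ∧ Module.finrank ℂ U = k :=
      ⟨_, ⊤, hTop, rfl⟩
    obtain ⟨U, hU, hUk⟩ := Nat.find_spec hex
    have hmin : ∀ W : Submodule ℂ (V → ℂ), Inv W → W ≤ U → W = U := by
      intro W hW hle
      refine Submodule.eq_of_le_of_finrank_le hle ?_
      rw [hUk]
      exact Nat.find_min' hex ⟨W, hW, rfl⟩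
    refine ⟨{
      carrier := ↥U
      π := fun h => (bigPi ω ψ h).restrict (hU.2 h)
      π_mul := fun h h' => ?_
      π_one := ?_
      nontriv := ?_
      central := fun z => ?_
      irred := fun W hW => ?_ }⟩
    · ext x
      simp [LinearMap.restrict_coe_apply, bigPi_mul ω ψ h h']
    · ext x
      simp [LinearMap.restrict_coe_apply, bigPi_apply]
    · obtain ⟨b, hbU, hb⟩ := Submodule.exists_mem_ne_zero_of_ne_bot hU.1
      exact ⟨⟨b, hbU⟩, by simpa [Submodule.mk_eq_zero] using hb⟩
    · ext x
      simp [LinearMap.restrict_coe_apply, bigPi_apply, smul_eq_mul]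
    · -- irreducibility from minimality
      by_cases hWbot : W = ⊥
      · exact Or.inl hWbot
      · refine Or.inr ?_
        have hmap : Submodule.map U.subtype W = U := by
          refine hmin _ ⟨?_, ?_⟩ (Submodule.map_subtype_le U W)
          · intro hmapbot
            apply hWbot
            have hinj : Function.Injective U.subtype := Subtype.coe_injective
            exact Submodule.map_injective_of_injective hinj
              (show Submodule.map U.subtype W = Submodule.map U.subtype ⊥ by
                rw [hmapbot, Submodule.map_bot])
          · rintro h w ⟨y, hyW, rfl⟩
            refine ⟨(bigPi ω ψ h).restrict (hU.2 h) y, hW h y hyW, ?_⟩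
            simp [LinearMap.restrict_coe_apply]
        have hinj : Function.Injective U.subtype := Subtype.coe_injective
        apply Submodule.map_injective_of_injective hinj
        rw [hmap, Submodule.map_subtype_top]
  · intro P Q
    exact exists_equiv halt hnd hψ h2 P Q

end KRSup
end
end

section
/- For any two enhanced Lagrangians L° and M°, the space of intertwining operators Int_{M°,L°} = Hom_{H(V,ω)}(H_{L°}, H_{M°}) (linear maps commuting with the right-translation action of the Heisenberg group) is one-dimensional over ℂ. -/
/-!
For any two enhanced Lagrangians `L°`, `M°` of a `2n`-dimensional symplectic
vector space `(V,ω)` over a finite field of odd cardinality, the space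
`Int_{M°,L°} = Hom_{H(V,ω)}(H_{L°}, H_{M°})` of intertwining operators between the
associated models of the Heisenberg representation is one-dimensional over `ℂ`.
-/

noncomputable section
set_option linter.unusedSectionVars false
set_option synthInstance.maxHeartbeats 1000000
set_option maxHeartbeats 1000000

namespace KRSup

variable (F V : Type) [Field F] [Fintype F] [AddCommGroup V] [Module F V]

variable {F V}

lemma hMul_assoc (ω : LinearMap.BilinForm F V) (h₁ h₂ h₃ : V × F) :
    hMul F V ω (hMul F V ω h₁ h₂) h₃ = hMul F V ω h₁ (hMul F V ω h₂ h₃) := by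
  simp only [hMul, Prod.mk.injEq, map_add, LinearMap.add_apply]
  exact ⟨add_assoc _ _ _, by ring⟩

variable (F V)

/-- The model `H_{L°}`: the space of functions `f : H → ℂ` with
`f((l,z)·h) = ψ(z)·f(h)` for all `l ∈ L`, `z ∈ F`. -/
def model (ω : LinearMap.BilinForm F V) (ψ : AddChar F ℂ) (L : Submodule F V) :
    Submodule ℂ ((V × F) → ℂ) where
  carrier := {f | ∀ l ∈ L, ∀ z : F, ∀ h : V × F, f (hMul F V ω (l, z) h) = ψ z * f h}
  add_mem' := by
    intro f g hf hg l hl z h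
    simp only [Pi.add_apply, hf l hl z h, hg l hl z h, mul_add]
  zero_mem' := by intro l hl z h; simp
  smul_mem' := by
    intro c f hf l hl z h
    simp only [Pi.smul_apply, smul_eq_mul, hf l hl z h]
    ring

/-- Right translation by `h₀` on functions on the Heisenberg group. -/
def rtrans (ω : LinearMap.BilinForm F V) (h₀ : V × F) :
    ((V × F) → ℂ) →ₗ[ℂ] ((V × F) → ℂ) where
  toFun f := fun h => f (hMul F V ω h h₀)
  map_add' _ _ := rfl
  map_smul' _ _ := rfl

lemma rtrans_mem (ω : LinearMap.BilinForm F V) (ψ : AddChar F ℂ) (L : Submodule F V)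
    (h₀ : V × F) {f : (V × F) → ℂ} (hf : f ∈ model F V ω ψ L) :
    rtrans F V ω h₀ f ∈ model F V ω ψ L := by
  intro l hl z h
  show f (hMul F V ω (hMul F V ω (l, z) h) h₀) = ψ z * f (hMul F V ω h h₀)
  rw [hMul_assoc]
  exact hf l hl z _

/-- The Heisenberg representation `π_{L°}` on the model `H_{L°}`, by right translation. -/
def heisAction (ω : LinearMap.BilinForm F V) (ψ : AddChar F ℂ) (L : Submodule F V)
    (h₀ : V × F) : ↥(model F V ω ψ L) →ₗ[ℂ] ↥(model F V ω ψ L) :=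
  (rtrans F V ω h₀).restrict (fun _ hf => rtrans_mem F V ω ψ L h₀ hf)

/-- An enhanced Lagrangian `(L, σ_L)`: a Lagrangian subspace `L ⊂ V` together with a
nonzero element `σ_L` of the `n`-th exterior power `ΛⁿL` (realized inside the
exterior algebra of `V` as the `n`-th power of the image of `L`). -/
structure EnhLag (ω : LinearMap.BilinForm F V) (n : ℕ) where
  /-- the Lagrangian subspace -/
  L : Submodule F V
  isotropic : ∀ x ∈ L, ∀ y ∈ L, ω x y = 0
  dim : Module.finrank F ↥L = n
  /-- the enhancement `σ_L ∈ ΛⁿL`, `σ_L ≠ 0` -/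
  σ : ExteriorAlgebra F V
  σ_mem : σ ∈ (Submodule.map (ExteriorAlgebra.ι F) L) ^ n
  σ_ne : σ ≠ 0

/-- The space of intertwining operators `Hom_{H(V,ω)}(H_{L°}, H_{M°})`:
linear maps commuting with the right-translation action of the Heisenberg group. -/
def intertwiners (ω : LinearMap.BilinForm F V) (ψ : AddChar F ℂ) (M L : Submodule F V) :
    Submodule ℂ (↥(model F V ω ψ L) →ₗ[ℂ] ↥(model F V ω ψ M)) where
  carrier := {T | ∀ h₀ : V × F,
    T ∘ₗ heisAction F V ω ψ L h₀ = heisAction F V ω ψ M h₀ ∘ₗ T}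
  add_mem' := by
    intro T S hT hS h₀
    simp only [LinearMap.add_comp, LinearMap.comp_add, hT h₀, hS h₀]
  zero_mem' := by intro h₀; simp
  smul_mem' := by
    intro c T hT h₀
    simp only [LinearMap.smul_comp, LinearMap.comp_smul, hT h₀]

instance instIntAcg (ω : LinearMap.BilinForm F V) (ψ : AddChar F ℂ) (M L : Submodule F V) :
    AddCommGroup ↥(intertwiners F V ω ψ M L) :=
  @Submodule.addCommGroup ℂ (↥(model F V ω ψ L) →ₗ[ℂ] ↥(model F V ω ψ M)) _
    inferInstance inferInstance _

instance instIntMod (ω : LinearMap.BilinForm F V) (ψ : AddChar F ℂ) (M L : Submodule F V) :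
    Module ℂ ↥(intertwiners F V ω ψ M L) :=
  @Submodule.module ℂ (↥(model F V ω ψ L) →ₗ[ℂ] ↥(model F V ω ψ M)) _
    inferInstance inferInstance _

/-!
Evaluating `T δ` at the identity, where `δ ∈ H_{L°}` is supported on `L̃` with `δ(l, z) = ψ z`,
is a linear functional on intertwiners `T`; it is nonzero on `f ↦ ∑_{m ∈ M} f((m, 0) · _)`.
It is also injective. `T δ` is left `M̃`- and right `L̃`-equivariant, hence determined on
`(M + L) × F` by its value at the identity, and it vanishes off `(M + L) × F = (L ∩ M)^⊥ × F`,
where conjugation by some `(u, 0)` with `u ∈ L ∩ M` multiplies it by `ψ (ω u v) ≠ 1`.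
Since the right translates of `δ` span `H_{L°}`, `T δ = 0` forces `T = 0`.
-/

section HeisenbergGroup

variable {F V} {ω : LinearMap.BilinForm F V}

def hInv (h : V × F) : V × F := (-h.1, -h.2)

lemma zero_hMul (h : V × F) : hMul F V ω (0, 0) h = h := by
  simp [hMul]

lemma hInv_hMul_cancel (halt : ω.IsAlt) (h : V × F) : hMul F V ω (hInv h) h = (0, 0) := by
  simp [hMul, hInv, halt.self_eq_zero]

lemma hMul_hInv_cancel (halt : ω.IsAlt) (h : V × F) : hMul F V ω h (hInv h) = (0, 0) := by
  simp [hMul, hInv, halt.self_eq_zero]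

lemma hInv_hMul (halt : ω.IsAlt) (a b : V × F) :
    hInv (hMul F V ω a b) = hMul F V ω (hInv b) (hInv a) := by
  ext
  · simp [hMul, hInv, add_comm]
  · simp only [hMul, hInv, map_neg, LinearMap.neg_apply, neg_neg]
    rw [← halt.neg_eq]
    ring

lemma hInv_hInv (h : V × F) : hInv (hInv h) = h := by
  simp [hInv]

def hMulLeft (halt : ω.IsAlt) (g : V × F) : Equiv.Perm (V × F) where
  toFun h := hMul F V ω g h
  invFun h := hMul F V ω (hInv g) h
  left_inv h := by simp only [← hMul_assoc, hInv_hMul_cancel halt, zero_hMul]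
  right_inv h := by simp only [← hMul_assoc, hMul_hInv_cancel halt, zero_hMul]

lemma hMul_hMul_neg (h2 : (2 : F) ≠ 0) (halt : ω.IsAlt) (u v : V) (z : F) :
    hMul F V ω (hMul F V ω (u, 0) (v, z)) (-u, 0) = hMul F V ω (0, ω u v) (v, z) := by
  simp only [hMul, map_add, map_neg, LinearMap.add_apply,
    halt.self_eq_zero, ← halt.neg_eq u v, map_zero, LinearMap.zero_apply]
  refine Prod.ext (by simp) ?_
  field_simp
  ring

end HeisenbergGroup

section Delta

variable {F V} {ω : LinearMap.BilinForm F V} {ψ : AddChar F ℂ} {L : Submodule F V}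

lemma indicator_mem_model (hL : ∀ x ∈ L, ∀ y ∈ L, ω x y = 0) :
    {h : V × F | h.1 ∈ L}.indicator (fun h => ψ h.2) ∈ model F V ω ψ L := by
  intro l hl z h
  by_cases hh : h.1 ∈ L
  · simp [hMul, hh, L.add_mem hl hh, hL l hl h.1 hh, AddChar.map_add_eq_mul]
  · simp [hMul, hh, L.add_mem_iff_right hl]

variable (ψ) in
def delta (hL : ∀ x ∈ L, ∀ y ∈ L, ω x y = 0) : model F V ω ψ L :=
  ⟨_, indicator_mem_model hL⟩

lemma heisAction_delta (hL : ∀ x ∈ L, ∀ y ∈ L, ω x y = 0) {l : V} (hl : l ∈ L) (z : F) :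
    heisAction F V ω ψ L (l, z) (delta ψ hL) = ψ z • delta ψ hL := by
  ext h
  show {h : V × F | h.1 ∈ L}.indicator (fun h => ψ h.2) (hMul F V ω h (l, z))
    = ψ z * {h : V × F | h.1 ∈ L}.indicator (fun h => ψ h.2) h
  by_cases hh : h.1 ∈ L
  · simp [hMul, hh, L.add_mem hh hl, hL h.1 hh l hl, AddChar.map_add_eq_mul, mul_comm]
  · simp [hMul, hh, L.add_mem_iff_left hl]

lemma natCard_smul_eq_sum_heisAction_delta [Fintype V] (halt : ω.IsAlt)
    (hL : ∀ x ∈ L, ∀ y ∈ L, ω x y = 0) (f : model F V ω ψ L) :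
    (Nat.card {g : V × F // g.1 ∈ L} : ℂ) • f
      = ∑ g, f.val (hInv g) • heisAction F V ω ψ L g (delta ψ hL) := by
  ext h
  have hterm (k : V × F) : f.val (hMul F V ω (hInv k) h) * (delta ψ hL).val k
      = {k : V × F | k.1 ∈ L}.indicator (fun _ => f.val h) k := by
    by_cases hk : k.1 ∈ L
    · have hcancel : ψ (-k.2) * ψ k.2 = 1 := by
        rw [← AddChar.map_add_eq_mul, neg_add_cancel, AddChar.map_zero_eq_one]
      simp only [hInv, f.2 _ (L.neg_mem hk), delta,
        Set.indicator_of_mem (show k ∈ {k : V × F | k.1 ∈ L} from hk)]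
      linear_combination f.val h * hcancel
    · simp [delta, hk]
  calc (Nat.card {g : V × F // g.1 ∈ L} : ℂ) * f.val h
      = ∑ k : V × F, {k : V × F | k.1 ∈ L}.indicator (fun _ => f.val h) k := by
        classical
        simp [Set.indicator_apply, Finset.sum_ite, Fintype.card_subtype, Nat.card_eq_fintype_card]
    _ = ∑ k, f.val (hInv (hMulLeft halt (hInv h) k))
          * (delta ψ hL).val (hMul F V ω h (hMulLeft halt (hInv h) k)) := by
        refine Finset.sum_congr rfl fun k _ => ?_
        rw [← hterm, hMulLeft, Equiv.coe_fn_mk, hInv_hMul halt, hInv_hInv, ← hMul_assoc,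
          hMul_hInv_cancel halt, zero_hMul]
    _ = ∑ g, f.val (hInv g) * (delta ψ hL).val (hMul F V ω h g) :=
        Equiv.sum_comp _ fun g => f.val (hInv g) * (delta ψ hL).val (hMul F V ω h g)
    _ = _ := by
        rw [AddSubmonoidClass.coe_finsetSum, Finset.sum_apply]
        rfl

end Delta

section Intertwiners

variable {F V} {ω : LinearMap.BilinForm F V} {ψ : AddChar F ℂ} {L M : Submodule F V}
  {T : model F V ω ψ L →ₗ[ℂ] model F V ω ψ M}

lemma apply_heisAction (hT : T ∈ intertwiners F V ω ψ M L) (g : V × F) (f : model F V ω ψ L) :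
    T (heisAction F V ω ψ L g f) = heisAction F V ω ψ M g (T f) :=
  LinearMap.congr_fun (hT g) f

lemma apply_delta_hMul_of_mem (hL : ∀ x ∈ L, ∀ y ∈ L, ω x y = 0)
    (hT : T ∈ intertwiners F V ω ψ M L) {l : V} (hl : l ∈ L) (z : F) (h : V × F) :
    (T (delta ψ hL)).val (hMul F V ω h (l, z)) = ψ z * (T (delta ψ hL)).val h := by
  have := congrArg (fun f : model F V ω ψ M => f.val h) (apply_heisAction hT (l, z) (delta ψ hL))
  rw [heisAction_delta hL hl, map_smul] at this
  exact this.symm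

lemma eq_zero_of_apply_delta_eq_zero [Fintype V] (halt : ω.IsAlt)
    (hL : ∀ x ∈ L, ∀ y ∈ L, ω x y = 0) (hT : T ∈ intertwiners F V ω ψ M L)
    (hδ : T (delta ψ hL) = 0) : T = 0 := by
  ext1 f
  have hN : (Nat.card {g : V × F // g.1 ∈ L} : ℂ) ≠ 0 := by
    have : Nonempty {g : V × F // g.1 ∈ L} := ⟨⟨0, L.zero_mem⟩⟩
    exact Nat.cast_ne_zero.mpr Nat.card_pos.ne'
  have hTf : (Nat.card {g : V × F // g.1 ∈ L} : ℂ) • T f = 0 := by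
    rw [← map_smul, natCard_smul_eq_sum_heisAction_delta halt hL, map_sum]
    simp [apply_heisAction hT, hδ]
  exact (smul_eq_zero.mp hTf).resolve_left hN

end Intertwiners

section Lagrangian

variable {F V} {ω : LinearMap.BilinForm F V} {L M : Submodule F V}

lemma sup_eq_orthogonal_inf [FiniteDimensional F V] (halt : ω.IsAlt) (hnd : ω.SeparatingLeft)
    (hL : ∀ x ∈ L, ∀ y ∈ L, ω x y = 0) (hM : ∀ x ∈ M, ∀ y ∈ M, ω x y = 0)
    (hdim : Module.finrank F L + Module.finrank F M = Module.finrank F V) :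
    L ⊔ M = ω.orthogonal (L ⊓ M) := by
  refine Submodule.eq_of_le_of_finrank_eq
    (sup_le (fun x hx u hu => hL u hu.1 x hx) (fun x hx u hu => hM u hu.2 x hx)) ?_
  have hperp := LinearMap.BilinForm.finrank_add_finrank_orthogonal halt.isRefl (L ⊓ M)
  rw [LinearMap.BilinForm.orthogonal_top_eq_ker halt.isRefl,
    LinearMap.separatingLeft_iff_ker_eq_bot.mp hnd, inf_bot_eq, finrank_bot] at hperp
  have hsup := Submodule.finrank_sup_add_finrank_inf_eq L M
  omega

end Lagrangian

section BiEquivariant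

variable {F V} {ω : LinearMap.BilinForm F V} {ψ : AddChar F ℂ} {L M : Submodule F V}
  {f : V × F → ℂ} (hfM : f ∈ model F V ω ψ M)
  (hfL : ∀ l ∈ L, ∀ z h, f (hMul F V ω h (l, z)) = ψ z * f h)
include hfM hfL

lemma apply_add_of_mem {m l : V} (hm : m ∈ M) (hl : l ∈ L) (z : F) :
    f (m + l, z) = ψ (z - 2⁻¹ * ω m l) * f (0, 0) := by
  have : hMul F V ω (m, z - 2⁻¹ * ω m l) (hMul F V ω (0, 0) (l, 0)) = (m + l, z) := by
    simp [hMul]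
  rw [← this, hfM m hm, hfL l hl, AddChar.map_zero_eq_one, one_mul]

lemma apply_eq_zero_of_notMem_orthogonal (h2 : (2 : F) ≠ 0) (halt : ω.IsAlt) (hψ : ψ ≠ 1)
    {v : V} (hv : v ∉ ω.orthogonal (L ⊓ M)) (z : F) : f (v, z) = 0 := by
  obtain ⟨c, hc⟩ := AddChar.ne_one_iff.mp hψ
  obtain ⟨u, huL, huM, hu⟩ : ∃ u ∈ L, u ∈ M ∧ ω u v ≠ 0 := by
    simpa [LinearMap.BilinForm.mem_orthogonal_iff] using hv
  set u' := (c / ω u v) • u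
  have hu' : ω u' v = c := by simp [u', hu]
  -- `(u', 0)` lies in both `L̃` and `M̃`, and conjugating by it is translation by `(0, c)`
  have hconj : f (v, z) = ψ c * f (v, z) := calc
    f (v, z) = f (hMul F V ω (hMul F V ω (u', 0) (v, z)) (-u', 0)) := by
      rw [hfL _ (L.neg_mem (L.smul_mem _ huL)), hfM _ (M.smul_mem _ huM)]
      simp
    _ = ψ c * f (v, z) := by rw [hMul_hMul_neg h2 halt, hfM 0 M.zero_mem, hu']
  have : (ψ c - 1) * f (v, z) = 0 := by linear_combination -hconj
  exact (mul_eq_zero.mp this).resolve_left (sub_ne_zero.mpr hc)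

lemma eq_zero_of_apply_zero_eq_zero (h2 : (2 : F) ≠ 0) (halt : ω.IsAlt) (hψ : ψ ≠ 1)
    (hLM : ω.orthogonal (L ⊓ M) ≤ L ⊔ M) (h0 : f (0, 0) = 0) : f = 0 := by
  funext ⟨v, z⟩
  by_cases hv : v ∈ ω.orthogonal (L ⊓ M)
  · obtain ⟨l, hl, m, hm, rfl⟩ := Submodule.mem_sup.mp (hLM hv)
    rw [add_comm, apply_add_of_mem hfM hfL hm hl, h0, mul_zero, Pi.zero_apply]
  · exact apply_eq_zero_of_notMem_orthogonal hfM hfL h2 halt hψ hv z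

end BiEquivariant

section SumLeftTranslates

variable {F V} {ω : LinearMap.BilinForm F V} {ψ : AddChar F ℂ} {L M : Submodule F V} [Fintype V]

open scoped Classical in
lemma sum_hMul_mem_model (hM : ∀ x ∈ M, ∀ y ∈ M, ω x y = 0) {f : V × F → ℂ}
    (hf : f ∈ model F V ω ψ L) :
    (fun h => ∑ m : M, f (hMul F V ω ((m : V), 0) h)) ∈ model F V ω ψ M := by
  intro m' hm' z h
  have hshift (m : M) : hMul F V ω ((m : V), 0) (hMul F V ω (m', z) h)
      = hMul F V ω (0, z) (hMul F V ω ((m + ⟨m', hm'⟩ : M), 0) h) := by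
    rw [← hMul_assoc, ← hMul_assoc]
    congr 1
    simp [hMul, hM m m.2 m' hm']
  simp only [hshift, hf 0 L.zero_mem, ← Finset.mul_sum]
  congr 1
  exact Equiv.sum_comp (Equiv.addRight ⟨m', hm'⟩) fun m : M => f (hMul F V ω ((m : V), 0) h)

open scoped Classical in
def sumLeftTranslates (hM : ∀ x ∈ M, ∀ y ∈ M, ω x y = 0) :
    model F V ω ψ L →ₗ[ℂ] model F V ω ψ M where
  toFun f := ⟨_, sum_hMul_mem_model hM f.2⟩
  map_add' f g := by
    ext h
    simp [Finset.sum_add_distrib]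
  map_smul' c f := by
    ext h
    simp [Finset.mul_sum]

lemma sumLeftTranslates_mem_intertwiners (hM : ∀ x ∈ M, ∀ y ∈ M, ω x y = 0) :
    sumLeftTranslates (L := L) (ψ := ψ) hM ∈ intertwiners F V ω ψ M L := by
  intro g
  ext f h
  simp [sumLeftTranslates, heisAction, rtrans, hMul_assoc]

lemma sumLeftTranslates_delta_apply_zero_ne_zero (hL : ∀ x ∈ L, ∀ y ∈ L, ω x y = 0)
    (hM : ∀ x ∈ M, ∀ y ∈ M, ω x y = 0) :
    (sumLeftTranslates hM (delta ψ hL)).val (0, 0) ≠ 0 := by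
  classical
  -- the value is the number of points of `L ∩ M`
  simpa [sumLeftTranslates, delta, hMul, Set.indicator_apply] using ⟨0, M.zero_mem, L.zero_mem⟩

end SumLeftTranslates

section EvalDelta

variable {F V} {ω : LinearMap.BilinForm F V} {ψ : AddChar F ℂ} {L M : Submodule F V}

variable (ψ M) in
def evalDelta (hL : ∀ x ∈ L, ∀ y ∈ L, ω x y = 0) : intertwiners F V ω ψ M L →ₗ[ℂ] ℂ where
  toFun T := (T.val (delta ψ hL)).val (0, 0)
  map_add' _ _ := rfl
  map_smul' _ _ := rfl

lemma evalDelta_injective [Fintype V] (h2 : (2 : F) ≠ 0) (halt : ω.IsAlt) (hψ : ψ ≠ 1)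
    (hL : ∀ x ∈ L, ∀ y ∈ L, ω x y = 0) (hLM : ω.orthogonal (L ⊓ M) ≤ L ⊔ M) :
    Function.Injective (evalDelta ψ M hL) := by
  refine (injective_iff_map_eq_zero _).mpr fun T hT => Subtype.ext ?_
  have hδ : T.val (delta ψ hL) = 0 := Subtype.ext <| eq_zero_of_apply_zero_eq_zero
    (T.val (delta ψ hL)).2 (fun l hl => apply_delta_hMul_of_mem hL T.2 hl) h2 halt hψ hLM hT
  exact eq_zero_of_apply_delta_eq_zero halt hL T.2 hδ

lemma evalDelta_surjective [Fintype V] (hL : ∀ x ∈ L, ∀ y ∈ L, ω x y = 0)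
    (hM : ∀ x ∈ M, ∀ y ∈ M, ω x y = 0) :
    Function.Surjective (evalDelta ψ M hL) :=
  LinearMap.surjective fun h => sumLeftTranslates_delta_apply_zero_ne_zero hL hM <|
    LinearMap.congr_fun h ⟨_, sumLeftTranslates_mem_intertwiners hM⟩

lemma finrank_intertwiners_eq_one [Fintype V] (h2 : (2 : F) ≠ 0) (halt : ω.IsAlt) (hψ : ψ ≠ 1)
    (hL : ∀ x ∈ L, ∀ y ∈ L, ω x y = 0) (hM : ∀ x ∈ M, ∀ y ∈ M, ω x y = 0)
    (hLM : ω.orthogonal (L ⊓ M) ≤ L ⊔ M) :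
    Module.finrank ℂ (intertwiners F V ω ψ M L) = 1 := by
  rw [(LinearEquiv.ofBijective (evalDelta ψ M hL)
    ⟨evalDelta_injective h2 halt hψ hL hLM, evalDelta_surjective hL hM⟩).finrank_eq,
    Module.finrank_self]

end EvalDelta

/-- For any two enhanced Lagrangians `L°` and `M°`, the space of intertwining
operators `Int_{M°,L°} = Hom_{H(V,ω)}(H_{L°}, H_{M°})` is one-dimensional over `ℂ`. -/
theorem intertwiners_one_dimensional
    (n : ℕ) [FiniteDimensional F V] (hdim : Module.finrank F V = 2 * n)
    (hq : Odd (Fintype.card F))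
    (ω : LinearMap.BilinForm F V)
    (halt : ∀ v : V, ω v v = 0)
    (hnd : ∀ v : V, (∀ u : V, ω v u = 0) → v = 0)
    (ψ : AddChar F ℂ) (hψ : ψ ≠ 1)
    (Lo Mo : EnhLag F V ω n) :
    Module.finrank ℂ ↥(intertwiners F V ω ψ Mo.L Lo.L) = 1 := by
  have : Finite V := Module.finite_of_finite F
  have : Fintype V := Fintype.ofFinite V
  have h2 : (2 : F) ≠ 0 := Ring.two_ne_zero fun hchar => by
    have := FiniteField.even_card_iff_char_two.mp hchar
    rw [Nat.odd_iff] at hq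
    omega
  have hLM : Lo.L ⊔ Mo.L = ω.orthogonal (Lo.L ⊓ Mo.L) :=
    sup_eq_orthogonal_inf halt hnd Lo.isotropic Mo.isotropic (by rw [Lo.dim, Mo.dim, hdim]; ring)
  exact finrank_intertwiners_eq_one h2 halt hψ Lo.isotropic Mo.isotropic hLM.ge

end KRSup
end
end

section
/- Linearization of the Weil representation: let (π, H) be an irreducible complex representation of the Heisenberg group H(V,ω) with central character ψ. Then there exists a group homomorphism ρ : Sp(V,ω) → GL(H) satisfying the Egorov identity ρ(g) π(v,z) ρ(g)⁻¹ = π(gv, z) for every g ∈ Sp(V,ω) and (v,z) ∈ H(V,ω). -/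
/-!
Linearization of the Weil representation: for an irreducible complex representation
`(π, H)` of the Heisenberg group `H(V,ω)` with central character `ψ`, there exists a
group homomorphism `ρ : Sp(V,ω) → GL(H)` satisfying the Egorov identity
`ρ(g) π(v,z) ρ(g)⁻¹ = π(gv, z)`.
-/

noncomputable section
set_option linter.unusedSectionVars false

namespace KRSup

variable (F V : Type) [Field F] [Fintype F] [AddCommGroup V] [Module F V]

/-- The symplectic group `Sp(V,ω)` of linear automorphisms preserving `ω`. -/
def Symp (ω : LinearMap.BilinForm F V) : Subgroup (V ≃ₗ[F] V) where
  carrier := {g | ∀ u v : V, ω (g u) (g v) = ω u v}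
  mul_mem' := by
    intro g h hg hh u v
    simpa using (hg (h u) (h v)).trans (hh u v)
  one_mem' := by intro u v; rfl
  inv_mem' := by
    intro g hg u v
    conv_rhs => rw [← g.apply_symm_apply u, ← g.apply_symm_apply v, hg]
    rfl

/-!
For each symplectic `g`, twisting `π` by `g` gives another irreducible representation with central
character `ψ`; it is isomorphic to `π`, and by Schur's lemma the intertwiner `T g` is unique up to
a scalar. Hence `T g * T h = c g h • T (g * h)` for a `ℂˣ`-valued 2-cocycle `c`, and it remains to
show that `c` is a coboundary. Taking determinants, `c ^ dim H` is a coboundary. A Sylow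
`p`-subgroup `U` of `Sp(V)` (`p` the characteristic) stabilises a Lagrangian `L`, and in the basis
`π (v, 0) w` (`v ∈ V ⧸ L`, `w` an `L`-fixed vector) the intertwiners of the elements of `U` can be
chosen multiplicatively; the transfer from `U` then shows that `c ^ [Sp(V) : U]` is a coboundary.
The same basis gives `dim H = |V ⧸ L|`, a power of `p`, hence prime to `[Sp(V) : U]`.
-/

section Coboundary

variable {G A : Type*} [Group G] [CommGroup A]

theorem exists_coboundary_of_coprime_pow {c : G → G → A} {η₁ η₂ : G → A} {a b : ℕ}
    (hab : a.Coprime b) (h₁ : ∀ g h, η₁ g * η₁ h = c g h ^ a * η₁ (g * h))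
    (h₂ : ∀ g h, η₂ g * η₂ h = c g h ^ b * η₂ (g * h)) :
    ∃ u : G → A, ∀ g h, u g * u h = c g h * u (g * h) := by
  set x := a.gcdA b
  set y := a.gcdB b
  have hbezout : (a : ℤ) * x + b * y = 1 := by
    rw [← Nat.gcd_eq_gcd_ab, hab, Nat.cast_one]
  refine ⟨fun g => η₁ g ^ x * η₂ g ^ y, fun g h => ?_⟩
  calc η₁ g ^ x * η₂ g ^ y * (η₁ h ^ x * η₂ h ^ y)
      = (η₁ g * η₁ h) ^ x * (η₂ g * η₂ h) ^ y := by
        rw [mul_zpow, mul_zpow, mul_mul_mul_comm]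
    _ = (c g h ^ a * η₁ (g * h)) ^ x * (c g h ^ b * η₂ (g * h)) ^ y := by rw [h₁, h₂]
    _ = c g h ^ ((a : ℤ) * x + b * y) * (η₁ (g * h) ^ x * η₂ (g * h) ^ y) := by
        rw [mul_zpow, mul_zpow, mul_mul_mul_comm, zpow_add, zpow_mul, zpow_mul, zpow_natCast,
          zpow_natCast]
    _ = c g h * (η₁ (g * h) ^ x * η₂ (g * h) ^ y) := by rw [hbezout, zpow_one]

end Coboundary

section ProjectiveRepresentation

variable {G K M : Type*} [Group G] [Field K] [AddCommGroup M] [Module K M]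

variable {T : G → Module.End K M} {c : G → G → Kˣ}

theorem exists_det_coboundary [FiniteDimensional K M] (hT : ∀ g, IsUnit (T g))
    (hc : ∀ g h, T g * T h = (c g h : K) • T (g * h)) :
    ∃ η : G → Kˣ, ∀ g h, η g * η h = c g h ^ Module.finrank K M * η (g * h) := by
  refine ⟨fun g => Units.map LinearMap.det (hT g).unit, fun g h => Units.ext ?_⟩
  simp only [Units.val_mul, Units.coe_map, IsUnit.unit_spec, Units.val_pow_eq_pow_val]
  rw [← map_mul, hc, LinearMap.det_smul]

theorem exists_transfer_coboundary [Nontrivial M] [Finite G] (hT : ∀ g, IsUnit (T g))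
    (hc : ∀ g h, T g * T h = (c g h : K) • T (g * h)) (Q : Subgroup G)
    (hQ : ∀ g ∈ Q, ∀ h ∈ Q, T g * T h = T (g * h)) :
    ∃ η : G → Kˣ, ∀ g h, η g * η h = c g h ^ Q.index * η (g * h) := by
  classical
  have : Fintype (G ⧸ Q) := Fintype.ofFinite _
  set r : G ⧸ Q → G := Quotient.out
  set s : G → G ⧸ Q → G := fun g x => (r (g • x))⁻¹ * (g * r x)
  have hs : ∀ g x, s g x ∈ Q := fun g x => QuotientGroup.eq.mp <| by
    rw [QuotientGroup.out_eq']; exact congrArg (g • ·) (QuotientGroup.out_eq' x).symm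
  have hrs : ∀ g x, r (g • x) * s g x = g * r x := fun g x => mul_inv_cancel_left _ _
  obtain ⟨z, hz⟩ : ∃ z : G → G ⧸ Q → Kˣ,
      ∀ g x, T g * T (r x) = (z g x : K) • (T (r (g • x)) * T (s g x)) :=
    ⟨fun g x => c g (r x) * (c (r (g • x)) (s g x))⁻¹, fun g x => by
      rw [hc, hc, hrs, smul_smul, ← Units.val_mul, inv_mul_cancel_right]⟩
  have hsmul : ∀ g h x, s g (h • x) * s h x = s (g * h) x := by
    intro g h x
    simp only [s, mul_smul, mul_assoc, mul_inv_cancel_left]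
  have hz_mul : ∀ g h x, z g (h • x) * z h x = c g h * z (g * h) x := by
    intro g h x
    -- expand `T g * T h * T (r x)` in both orders and cancel an invertible operator
    refine Units.ext (smul_left_injective K
      ((hT (r ((g * h) • x))).mul (hT (s (g * h) x))).ne_zero ?_)
    calc ((z g (h • x) * z h x : Kˣ) : K) • (T (r ((g * h) • x)) * T (s (g * h) x))
        = T g * (T h * T (r x)) := by
          rw [hz h x, mul_smul_comm, ← mul_assoc, hz g (h • x), smul_mul_assoc, smul_smul,
            mul_assoc, hQ _ (hs _ _) _ (hs _ _), hsmul, mul_smul, Units.val_mul, mul_comm]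
      _ = ((c g h * z (g * h) x : Kˣ) : K) • (T (r ((g * h) • x)) * T (s (g * h) x)) := by
          rw [← mul_assoc, hc, smul_mul_assoc, hz, smul_smul, Units.val_mul]
  refine ⟨fun g => ∏ x, z g x, fun g h => ?_⟩
  calc (∏ x, z g x) * ∏ x, z h x = ∏ x, (z g (h • x) * z h x) := by
        rw [Finset.prod_mul_distrib, ← Fintype.prod_bijective _ (MulAction.bijective h)
          (fun x => z g (h • x)) (z g) (fun _ => rfl)]
    _ = c g h ^ Q.index * ∏ x, z (g * h) x := by
        simp_rw [hz_mul, Finset.prod_mul_distrib, Finset.prod_const, Finset.card_univ,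
          Subgroup.index_eq_card, Nat.card_eq_fintype_card]

theorem exists_monoidHom_smul_eq_of_coprime_index [Finite G] [FiniteDimensional K M]
    [Nontrivial M] (hT : ∀ g, IsUnit (T g)) (hproj : ∀ g h, ∃ a : K, T g * T h = a • T (g * h))
    (Q : Subgroup G) (hQ : ∀ g ∈ Q, ∀ h ∈ Q, T g * T h = T (g * h))
    (hcop : Q.index.Coprime (Module.finrank K M)) :
    ∃ ρ : G →* (M ≃ₗ[K] M), ∀ g, ∃ a : K, (ρ g : M →ₗ[K] M) = a • T g := by
  choose a ha using hproj
  have ha₀ : ∀ g h, a g h ≠ 0 := fun g h ha₀ =>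
    ((hT g).mul (hT h)).ne_zero (by rw [ha, ha₀, zero_smul])
  set c : G → G → Kˣ := fun g h => Units.mk0 (a g h) (ha₀ g h)
  have hc : ∀ g h, T g * T h = (c g h : K) • T (g * h) := ha
  obtain ⟨η₁, hη₁⟩ := exists_transfer_coboundary hT hc Q hQ
  obtain ⟨η₂, hη₂⟩ := exists_det_coboundary hT hc
  obtain ⟨u, hu⟩ := exists_coboundary_of_coprime_pow hcop hη₁ hη₂
  have hf : ∀ g, IsUnit ((u g)⁻¹ • T g) := fun g => (isUnit_smul_iff _ _).mpr (hT g)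
  refine ⟨MonoidHom.mk' (fun g => LinearMap.GeneralLinearGroup.generalLinearEquiv K M (hf g).unit)
    fun g h => ?_, fun g => ⟨(u g : K)⁻¹, by simp [Units.smul_def]⟩⟩
  rw [← map_mul]
  congr 1
  ext1
  simp only [IsUnit.unit_spec, Units.val_mul, smul_mul_smul_comm, hc, smul_smul, Units.smul_def]
  rw [← Units.val_mul, ← Units.val_mul, ← mul_inv_rev, mul_comm (u h), hu, mul_inv_rev,
    inv_mul_cancel_right]

end ProjectiveRepresentation

theorem AddChar.exists_apply_comp_ne_one {K W : Type*} [Field K] [AddCommGroup W] [Module K W]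
    {ψ : AddChar K ℂ} (hψ : ψ ≠ 1) {f : W →ₗ[K] K} (hf : f ≠ 0) : ∃ w, ψ (f w) ≠ 1 := by
  obtain ⟨c, hc⟩ := AddChar.ne_one_iff.mp hψ
  obtain ⟨w, hw⟩ := DFunLike.ne_iff.mp hf
  exact ⟨(c / f w) • w, by rwa [map_smul, smul_eq_mul, div_mul_cancel₀ _ hw]⟩

theorem AddChar.sum_apply_comp_eq_zero {K W : Type*} [Field K] [AddCommGroup W] [Module K W]
    [Fintype W] {ψ : AddChar K ℂ} (hψ : ψ ≠ 1) {f : W →ₗ[K] K} (hf : f ≠ 0) :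
    ∑ w, ψ (f w) = 0 :=
  AddChar.sum_eq_zero_of_ne_one (ψ := ψ.compAddMonoidHom f.toAddMonoidHom)
    (AddChar.ne_one_iff.mpr (AddChar.exists_apply_comp_ne_one hψ hf))

theorem Submodule.sub_out_mk_mem {R M : Type*} [Ring R] [AddCommGroup M] [Module R M]
    {L : Submodule R M} (v : M) : v - (Submodule.Quotient.mk v : M ⧸ L).out ∈ L :=
  (Submodule.Quotient.eq L).mp (Submodule.Quotient.mk_out _).symm

theorem Representation.exists_ne_zero_forall_apply_eq {k G W : Type*} [Field k] [Finite k]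
    {p : ℕ} [Fact p.Prime] [CharP k p] [Group G] (hG : IsPGroup p G) [AddCommGroup W] [Module k W]
    [Module.Finite k W] [Nontrivial W] (ρ : Representation k G W) : ∃ w ≠ 0, ∀ g, ρ g w = w := by
  let _ : MulAction G W := MulAction.compHom W ρ
  have : Finite W := Module.finite_of_finite k
  have hp : p ∣ Nat.card W := by
    have := Fintype.ofFinite k
    obtain ⟨n, -, hk⟩ := FiniteField.card k p
    rw [Module.natCard_eq_pow_finrank (K := k), Nat.card_eq_fintype_card, hk, ← pow_mul]
    exact dvd_pow_self p (mul_ne_zero n.ne_zero Module.finrank_pos.ne')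
  obtain ⟨w, hw, hw₀⟩ :=
    hG.exists_fixed_point_of_prime_dvd_card_of_fixed_point W hp (a := 0) fun g => map_zero (ρ g)
  exact ⟨w, hw₀.symm, hw⟩

section Lagrangian

variable {F V} {ω : LinearMap.BilinForm F V}

theorem exists_mem_orthogonal_notMem_forall_sub_mem [FiniteDimensional F V] {p : ℕ}
    [Fact p.Prime] [CharP F p] {U : Subgroup (Symp F V ω)} (hU : IsPGroup p U)
    {L : Submodule F V} (hLU : ∀ g ∈ U, ∀ l ∈ L, (g : V ≃ₗ[F] V) l ∈ L)
    (hL : ¬ ω.orthogonal L ≤ L) :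
    ∃ w ∈ ω.orthogonal L, w ∉ L ∧ ∀ g ∈ U, (g : V ≃ₗ[F] V) w - w ∈ L := by
  set ρ : Representation F U V := LinearEquiv.automorphismGroup.toLinearMapMonoidHom.comp
    ((Symp F V ω).subtype.comp U.subtype)
  have hρL : ∀ g : U, L ≤ L.comap (ρ g) := fun g l hl => hLU g g.2 l hl
  have hρW : ∀ g : U, ω.orthogonal L ≤ (ω.orthogonal L).comap (ρ g) := fun g x hx l hl => by
    have hl' : ρ g (ρ g⁻¹ l) = l := by
      rw [← Module.End.mul_apply, ← map_mul, mul_inv_cancel, map_one, Module.End.one_apply]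
    rw [← hl']
    exact ((g : Symp F V ω).2 _ x).trans (hx _ (hρL g⁻¹ hl))
  set W := ω.orthogonal L
  set σ := (ρ.subrepresentation W hρW).quotient (L.comap W.subtype) fun g _ hx => hρL g hx
  obtain ⟨x, hxW, hxL⟩ := Set.not_subset.mp hL
  have : Nontrivial (W ⧸ L.comap W.subtype) := nontrivial_of_ne
    (Submodule.Quotient.mk ⟨x, hxW⟩) 0 ((Submodule.Quotient.mk_eq_zero _).not.mpr hxL)
  obtain ⟨y, hy₀, hy⟩ := Representation.exists_ne_zero_forall_apply_eq hU σ
  obtain ⟨⟨w, hw⟩, rfl⟩ := Submodule.Quotient.mk_surjective _ y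
  refine ⟨w, hw, fun hwL => hy₀ ((Submodule.Quotient.mk_eq_zero _).mpr hwL), fun g hg => ?_⟩
  exact (Submodule.Quotient.eq (L.comap W.subtype)).mp (hy ⟨g, hg⟩)

theorem sup_span_singleton_le_orthogonal (hω : ω.IsAlt) {L : Submodule F V}
    (hL : L ≤ ω.orthogonal L) {w : V} (hw : w ∈ ω.orthogonal L) :
    L ⊔ Submodule.span F {w} ≤ ω.orthogonal (L ⊔ Submodule.span F {w}) := by
  intro x hx y hy
  obtain ⟨a, ha, _, hc, rfl⟩ := Submodule.mem_sup.mp hx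
  obtain ⟨b, hb, _, hd, rfl⟩ := Submodule.mem_sup.mp hy
  obtain ⟨c, rfl⟩ := Submodule.mem_span_singleton.mp hc
  obtain ⟨d, rfl⟩ := Submodule.mem_span_singleton.mp hd
  have hwa : ω w a = 0 := by rw [← hω.neg_eq, hw a ha, neg_zero]
  simp [hL ha b hb, hw b hb, hwa, hω.self_eq_zero]

theorem exists_orthogonal_eq_self_forall_map_eq [FiniteDimensional F V] (hω : ω.IsAlt)
    {p : ℕ} [Fact p.Prime] [CharP F p] {U : Subgroup (Symp F V ω)} (hU : IsPGroup p U) :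
    ∃ L : Submodule F V, ω.orthogonal L = L ∧
      ∀ g ∈ U, L.map ((g : V ≃ₗ[F] V) : V →ₗ[F] V) = L := by
  have : Finite V := Module.finite_of_finite F
  have : Finite (Submodule F V) := Finite.of_injective _ SetLike.coe_injective
  obtain ⟨L, ⟨hLiso, hLU⟩, hLmax⟩ := (Set.toFinite {L : Submodule F V |
    L ≤ ω.orthogonal L ∧ ∀ g ∈ U, ∀ l ∈ L, (g : V ≃ₗ[F] V) l ∈ L}).exists_maximal
    ⟨⊥, by simp, fun g _ l hl => by simp_all⟩
  refine ⟨L, le_antisymm (not_not.mp fun hL => ?_) hLiso, fun g hg => ?_⟩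
  · obtain ⟨w, hwL', hwL, hw⟩ := exists_mem_orthogonal_notMem_forall_sub_mem hU hLU hL
    refine hwL (hLmax ⟨sup_span_singleton_le_orthogonal hω hLiso hwL', fun g hg x hx => ?_⟩
      le_sup_left (Submodule.mem_sup_right (Submodule.mem_span_singleton_self w)))
    obtain ⟨a, ha, _, hc, rfl⟩ := Submodule.mem_sup.mp hx
    obtain ⟨c, rfl⟩ := Submodule.mem_span_singleton.mp hc
    rw [map_add, map_smul, ← sub_add_cancel ((g : V ≃ₗ[F] V) w) w, smul_add, ← add_assoc]
    exact Submodule.add_mem_sup (L.add_mem (hLU g hg a ha) (L.smul_mem c (hw g hg)))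
      (Submodule.smul_mem _ c (Submodule.mem_span_singleton_self w))
  · refine le_antisymm (Submodule.map_le_iff_le_comap.mpr fun l hl => hLU g hg l hl)
      fun l hl => ⟨_, hLU g⁻¹ (U.inv_mem hg) l hl, ?_⟩
    change ((g * g⁻¹ : Symp F V ω) : V ≃ₗ[F] V) l = l
    simp

end Lagrangian

section Heisenberg

variable {F V}

open Classical in
theorem sum_addChar_apply_eq_ite {ω : LinearMap.BilinForm F V} {ψ : AddChar F ℂ}
    {L : Submodule F V} [Fintype L] (hψ : ψ ≠ 1) (hL : ω.orthogonal L = L) (x : V) :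
    ∑ l : L, ψ (ω l x) = if x ∈ L then (Fintype.card L : ℂ) else 0 := by
  split_ifs with hx
  · simp [hL.ge hx _ (Subtype.property _)]
  · refine AddChar.sum_apply_comp_eq_zero hψ (f := LinearMap.flip ω x ∘ₗ L.subtype) fun hf => ?_
    refine hx (hL.le fun l hl => ?_)
    simpa using LinearMap.congr_fun hf ⟨l, hl⟩

namespace HeisenbergRep

variable {ω : LinearMap.BilinForm F V} {ψ : AddChar F ℂ} (P : HeisenbergRep F V ω ψ)

instance : Nontrivial P.carrier :=
  let ⟨w, hw⟩ := P.nontriv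
  nontrivial_of_ne w 0 hw

theorem π_zero : P.π (0, 0) = 1 := P.π_one

theorem π_eq_smul (v : V) (z : F) : P.π (v, z) = ψ z • P.π (v, 0) := by
  rw [← LinearMap.id_comp (P.π (v, 0)), ← LinearMap.smul_comp, ← P.central, ← P.π_mul]
  simp [hMul]

theorem π_mul_π (v w : V) :
    P.π (v, 0) * P.π (w, 0) = ψ ((2 : F)⁻¹ * ω v w) • P.π (v + w, 0) := by
  rw [Module.End.mul_eq_comp, ← P.π_mul, ← π_eq_smul]
  simp [hMul]

theorem π_apply_π_apply (w v : V) (z : F) (x : P.carrier) :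
    P.π (w, z) (P.π (v, 0) x) = ψ (z + (2 : F)⁻¹ * ω w v) • P.π (w + v, 0) x := by
  rw [π_eq_smul, LinearMap.smul_apply, ← Module.End.mul_apply, π_mul_π, AddChar.map_add_eq_mul,
    mul_smul, LinearMap.smul_apply]

theorem π_mul_π_neg (hω : ω.IsAlt) (v : V) : P.π (v, 0) * P.π (-v, 0) = 1 := by
  rw [π_mul_π, map_neg, hω.self_eq_zero, neg_zero, mul_zero, AddChar.map_zero_eq_one, one_smul,
    add_neg_cancel, π_zero]

theorem π_mul_π_mul_π_neg (h2 : (2 : F) ≠ 0) (hω : ω.IsAlt) (u v : V) :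
    P.π (u, 0) * P.π (v, 0) * P.π (-u, 0) = ψ (ω u v) • P.π (v, 0) := by
  rw [π_mul_π, smul_mul_assoc, π_mul_π, smul_smul, ← AddChar.map_add_eq_mul, add_neg_cancel_comm]
  congr 2
  rw [map_neg, map_add, LinearMap.add_apply, hω.self_eq_zero, zero_add, ← hω.neg_eq u v]
  field_simp
  ring

theorem trace_π_eq_zero (h2 : (2 : F) ≠ 0) (hω : ω.IsAlt) (hnd : ω.SeparatingLeft) (hψ : ψ ≠ 1)
    {v : V} (hv : v ≠ 0) : LinearMap.trace ℂ P.carrier (P.π (v, 0)) = 0 := by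
  have hf : ω v ≠ 0 := fun h => hv (hnd v fun u => by rw [h, LinearMap.zero_apply])
  obtain ⟨u, hu⟩ := AddChar.exists_apply_comp_ne_one hψ hf
  -- conjugation by `π (-u, 0)` preserves the trace and multiplies `π (v, 0)` by `ψ (ω v u) ≠ 1`
  have h := congrArg (LinearMap.trace ℂ P.carrier) (P.π_mul_π_mul_π_neg h2 hω (-u) v)
  rw [neg_neg, LinearMap.trace_mul_comm, ← mul_assoc, P.π_mul_π_neg hω, one_mul, map_smul, map_neg,
    LinearMap.neg_apply, hω.neg_eq, smul_eq_mul] at h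
  by_contra htr
  exact hu ((mul_eq_right₀ htr).mp h.symm)

theorem eq_top_of_forall_π_apply_mem {U : Submodule ℂ P.carrier} (hU : U ≠ ⊥)
    (hinv : ∀ h, ∀ x ∈ U, P.π h x ∈ U) : U = ⊤ :=
  (P.irred U hinv).resolve_left hU

theorem exists_eq_smul_one_of_commute {C : Module.End ℂ P.carrier}
    (hC : ∀ h, C * P.π h = P.π h * C) : ∃ μ : ℂ, C = μ • 1 := by
  obtain ⟨μ, hμ⟩ := Module.End.exists_eigenvalue C
  refine ⟨μ, LinearMap.ext fun x => Module.End.mem_eigenspace_iff.mp ?_⟩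
  rw [P.eq_top_of_forall_π_apply_mem (Module.End.hasEigenvalue_iff.mp hμ) fun h y hy => ?_]
  · trivial
  rw [Module.End.mem_eigenspace_iff] at hy ⊢
  rw [← Module.End.mul_apply, hC, Module.End.mul_apply, hy, map_smul]

def Intertwines (g : V ≃ₗ[F] V) (A : Module.End ℂ P.carrier) : Prop :=
  ∀ v z, A * P.π (v, z) = P.π (g v, z) * A

variable {P}

theorem Intertwines.mul {g h : V ≃ₗ[F] V} {A B : Module.End ℂ P.carrier}
    (hA : P.Intertwines g A) (hB : P.Intertwines h B) : P.Intertwines (g * h) (A * B) :=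
  fun v z => by rw [mul_assoc, hB, ← mul_assoc, hA, mul_assoc, LinearEquiv.mul_apply]

theorem Intertwines.smul {g : V ≃ₗ[F] V} {A : Module.End ℂ P.carrier} (hA : P.Intertwines g A)
    (a : ℂ) : P.Intertwines g (a • A) :=
  fun v z => by rw [smul_mul_assoc, hA, mul_smul_comm]

theorem Intertwines.isUnit {g : V ≃ₗ[F] V} {A : Module.End ℂ P.carrier}
    (hA : P.Intertwines g A) (hA₀ : A ≠ 0) : IsUnit A := by
  rw [LinearMap.isUnit_iff_ker_eq_bot]
  refine (P.irred _ fun ⟨v, z⟩ x hx => ?_).resolve_right fun h => hA₀ ?_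
  · rw [LinearMap.mem_ker] at hx ⊢
    rw [← Module.End.mul_apply, hA, Module.End.mul_apply, hx, map_zero]
  · exact LinearMap.ker_eq_top.mp h

theorem Intertwines.exists_eq_smul {g : V ≃ₗ[F] V} {A B : Module.End ℂ P.carrier}
    (hA : P.Intertwines g A) (hB : P.Intertwines g B) (hBu : IsUnit B) : ∃ μ : ℂ, A = μ • B := by
  obtain ⟨b, rfl⟩ := hBu
  have hb : ∀ v z, (↑b⁻¹ : Module.End ℂ P.carrier) * P.π (g v, z) = P.π (v, z) * ↑b⁻¹ :=
    fun v z => by rw [Units.inv_mul_eq_iff_eq_mul, ← mul_assoc, hB, mul_assoc, Units.mul_inv,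
      mul_one]
  obtain ⟨μ, hμ⟩ := P.exists_eq_smul_one_of_commute (C := ↑b⁻¹ * A) fun ⟨v, z⟩ => by
    rw [mul_assoc, hA, ← mul_assoc, hb, mul_assoc]
  refine ⟨μ, ?_⟩
  rw [← Units.mul_inv_cancel_left b A, hμ, mul_smul_comm, mul_one]

theorem Intertwines.conj_eq {g : V ≃ₗ[F] V} {e : P.carrier ≃ₗ[ℂ] P.carrier}
    (he : P.Intertwines g e.toLinearMap) (v : V) (z : F) :
    (e.toLinearMap ∘ₗ P.π (v, z)) ∘ₗ e.symm.toLinearMap = P.π (g v, z) := by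
  rw [← Module.End.mul_eq_comp, ← Module.End.mul_eq_comp, he, mul_assoc,
    Module.End.mul_eq_comp e.toLinearMap, LinearEquiv.comp_symm, Module.End.one_eq_id.symm, mul_one]

variable (P)

theorem π_apply_ne_zero (hω : ω.IsAlt) {w : P.carrier} (hw : w ≠ 0) (v : V) :
    P.π (v, 0) w ≠ 0 := fun h =>
  hw (by simpa [h] using (congrArg (· w) (P.π_mul_π_neg hω (-v))).symm)

def IsVacuum (L : Submodule F V) (w : P.carrier) : Prop :=
  ∀ l ∈ L, P.π (l, 0) w = w

theorem exists_isVacuum [FiniteDimensional F V] (h2 : (2 : F) ≠ 0)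
    (hω : ω.IsAlt) (hnd : ω.SeparatingLeft) (hψ : ψ ≠ 1) {L : Submodule F V}
    (hL : L ≤ ω.orthogonal L) : ∃ w : P.carrier, w ≠ 0 ∧ P.IsVacuum L w := by
  classical
  have : Finite V := Module.finite_of_finite F
  have : Fintype L := Fintype.ofFinite L
  -- `E` has trace `dim H` because `tr π (v, 0) = 0` for `v ≠ 0`, and its image is `L`-fixed
  set E := ∑ l : L, P.π ((l : V), 0)
  have hE : ∀ l ∈ L, P.π (l, 0) * E = E := fun l hl => by
    rw [Finset.mul_sum]
    refine Fintype.sum_equiv (Equiv.addLeft ⟨l, hl⟩) _ _ fun l' => ?_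
    rw [π_mul_π, hL l'.2 l hl, mul_zero, AddChar.map_zero_eq_one, one_smul]
    rfl
  have htrace : LinearMap.trace ℂ P.carrier E = Module.finrank ℂ P.carrier := by
    rw [map_sum, Fintype.sum_eq_single 0 fun l hl =>
      P.trace_π_eq_zero h2 hω hnd hψ (by exact_mod_cast hl), Submodule.coe_zero, π_zero,
      LinearMap.trace_one]
  have hE₀ : E ≠ 0 := fun h => by
    rw [h, map_zero, eq_comm, Nat.cast_eq_zero] at htrace
    exact Module.finrank_pos.ne' htrace
  obtain ⟨x, hx⟩ := DFunLike.ne_iff.mp hE₀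
  exact ⟨E x, hx, fun l hl => by rw [← Module.End.mul_apply, hE l hl]⟩

theorem span_range_π_apply {w : P.carrier} (hw : w ≠ 0) :
    Submodule.span ℂ (Set.range fun v => P.π (v, 0) w) = ⊤ := by
  refine P.eq_top_of_forall_π_apply_mem (by simpa using ⟨0, by rwa [π_zero]⟩)
    fun ⟨v, z⟩ x hx => ?_
  induction hx using Submodule.span_induction with
  | mem y hy =>
    obtain ⟨u, rfl⟩ := hy
    rw [π_apply_π_apply]
    exact Submodule.smul_mem _ _ (Submodule.subset_span ⟨v + u, rfl⟩)
  | zero => simp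
  | add a b _ _ ha hb => rw [map_add]; exact Submodule.add_mem _ ha hb
  | smul c a _ ha => rw [map_smul]; exact Submodule.smul_mem _ _ ha

section Vacuum

variable {L : Submodule F V} {w : P.carrier}

theorem π_add_apply_eq_smul (hω : ω.IsAlt) (hw : P.IsVacuum L w) (v : V) {l : V}
    (hl : l ∈ L) : P.π (v + l, 0) w = ψ ((2 : F)⁻¹ * ω l v) • P.π (v, 0) w := by
  have hψ : ψ ((2 : F)⁻¹ * ω l v) * ψ ((2 : F)⁻¹ * ω v l) = 1 := by
    rw [← AddChar.map_add_eq_mul, ← mul_add, ← hω.neg_eq, neg_add_cancel, mul_zero,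
      AddChar.map_zero_eq_one]
  conv_rhs => rw [← hw l hl, π_apply_π_apply, zero_add, smul_smul, hψ, one_smul]

theorem π_mem_apply_eq_smul (h2 : (2 : F) ≠ 0) (hω : ω.IsAlt) (hw : P.IsVacuum L w)
    {l : V} (hl : l ∈ L) (v : V) : P.π (l, 0) (P.π (v, 0) w) = ψ (ω l v) • P.π (v, 0) w := by
  rw [π_apply_π_apply, add_comm l, P.π_add_apply_eq_smul hω hw v hl, smul_smul,
    ← AddChar.map_add_eq_mul, zero_add, ← add_mul, ← two_mul, mul_inv_cancel₀ h2,
    one_mul]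

theorem linearIndependent_π_out_apply [FiniteDimensional F V] (h2 : (2 : F) ≠ 0)
    (hω : ω.IsAlt) (hψ : ψ ≠ 1) (hL : ω.orthogonal L = L) (hw₀ : w ≠ 0) (hw : P.IsVacuum L w) :
    LinearIndependent ℂ fun x : V ⧸ L => P.π (x.out, 0) w := by
  classical
  have : Finite V := Module.finite_of_finite F
  have : Fintype L := Fintype.ofFinite L
  set S : V → Module.End ℂ P.carrier := fun u => ∑ l : L, ψ (-ω l u) • P.π ((l : V), 0)
  have hS : ∀ u v, S u (P.π (v, 0) w) =
      (if v - u ∈ L then (Fintype.card L : ℂ) else 0) • P.π (v, 0) w := fun u v => by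
    rw [← sum_addChar_apply_eq_ite hψ hL, Finset.sum_smul, LinearMap.sum_apply]
    refine Finset.sum_congr rfl fun l _ => ?_
    rw [LinearMap.smul_apply, P.π_mem_apply_eq_smul h2 hω hw l.2, smul_smul,
      ← AddChar.map_add_eq_mul, map_sub, sub_eq_neg_add]
  rw [linearIndependent_iff']
  intro s g hg i hi
  have h := congrArg (S i.out) hg
  rw [map_sum, map_zero, Finset.sum_eq_single i (fun x _ hxi => ?_) (absurd hi), map_smul, hS,
    sub_self, if_pos L.zero_mem, smul_smul] at h
  · exact (mul_eq_zero.mp ((smul_eq_zero.mp h).resolve_right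
      (P.π_apply_ne_zero hω hw₀ _))).resolve_right (by simp)
  · rw [map_smul, hS, if_neg fun hx => hxi ?_, zero_smul, smul_zero]
    rw [← Submodule.Quotient.mk_out x, ← Submodule.Quotient.mk_out i]
    exact (Submodule.Quotient.eq L).mpr hx

theorem span_range_π_out_apply (hω : ω.IsAlt) (hw₀ : w ≠ 0) (hw : P.IsVacuum L w) :
    ⊤ ≤ Submodule.span ℂ (Set.range fun x : V ⧸ L => P.π (x.out, 0) w) := by
  rw [← P.span_range_π_apply hw₀, Submodule.span_le]
  rintro _ ⟨v, rfl⟩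
  have h := P.π_add_apply_eq_smul hω hw (Submodule.Quotient.mk v : V ⧸ L).out
    (Submodule.sub_out_mk_mem v)
  rw [add_sub_cancel] at h
  simp only [SetLike.mem_coe, h]
  exact Submodule.smul_mem _ _ (Submodule.subset_span ⟨_, rfl⟩)

def vacuumBasis [FiniteDimensional F V] (h2 : (2 : F) ≠ 0) (hω : ω.IsAlt) (hψ : ψ ≠ 1)
    (hL : ω.orthogonal L = L) (hw₀ : w ≠ 0) (hw : P.IsVacuum L w) :
    Module.Basis (V ⧸ L) ℂ P.carrier :=
  .mk (P.linearIndependent_π_out_apply h2 hω hψ hL hw₀ hw) (P.span_range_π_out_apply hω hw₀ hw)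

theorem vacuumBasis_apply [FiniteDimensional F V] (h2 : (2 : F) ≠ 0) (hω : ω.IsAlt)
    (hψ : ψ ≠ 1) (hL : ω.orthogonal L = L) (hw₀ : w ≠ 0) (hw : P.IsVacuum L w)
    (x : V ⧸ L) : P.vacuumBasis h2 hω hψ hL hw₀ hw x = P.π (x.out, 0) w :=
  Module.Basis.mk_apply _ _ _

theorem exists_apply_π_apply_eq [FiniteDimensional F V] (h2 : (2 : F) ≠ 0) (hω : ω.IsAlt)
    (hψ : ψ ≠ 1) (hL : ω.orthogonal L = L) (hw₀ : w ≠ 0) (hw : P.IsVacuum L w)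
    {L' : Submodule F V} {w' : P.carrier} (hw' : P.IsVacuum L' w')
    {g : V ≃ₗ[F] V} (hg : g ∈ Symp F V ω) (hgL : ∀ l ∈ L, g l ∈ L') :
    ∃ T : Module.End ℂ P.carrier, ∀ v, T (P.π (v, 0) w) = P.π (g v, 0) w' := by
  refine ⟨(P.vacuumBasis h2 hω hψ hL hw₀ hw).constr ℂ fun x => P.π (g x.out, 0) w', fun v => ?_⟩
  have hv := P.π_add_apply_eq_smul hω hw (Submodule.Quotient.mk v : V ⧸ L).out
    (Submodule.sub_out_mk_mem v)
  have hgv := P.π_add_apply_eq_smul hω hw' (g (Submodule.Quotient.mk v : V ⧸ L).out)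
    (hgL _ (Submodule.sub_out_mk_mem v))
  rw [add_sub_cancel] at hv
  rw [← map_add, add_sub_cancel, hg] at hgv
  rw [hv, hgv, map_smul, ← P.vacuumBasis_apply h2 hω hψ hL hw₀ hw, Module.Basis.constr_basis]

theorem intertwines_of_forall_apply_π_apply (hw₀ : w ≠ 0) {w' : P.carrier} {g : V ≃ₗ[F] V}
    (hg : g ∈ Symp F V ω) {T : Module.End ℂ P.carrier}
    (hT : ∀ v, T (P.π (v, 0) w) = P.π (g v, 0) w') : P.Intertwines g T := fun u z =>
  LinearMap.ext_on_range (P.span_range_π_apply hw₀) fun v => by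
    rw [Module.End.mul_apply, Module.End.mul_apply, π_apply_π_apply, map_smul, hT, hT,
      π_apply_π_apply, map_add g, hg]

end Vacuum

theorem finrank_eq_card_quotient [FiniteDimensional F V] (h2 : (2 : F) ≠ 0) (hω : ω.IsAlt)
    (hnd : ω.SeparatingLeft) (hψ : ψ ≠ 1) {L : Submodule F V} (hL : ω.orthogonal L = L) :
    Module.finrank ℂ P.carrier = Nat.card (V ⧸ L) := by
  obtain ⟨w, hw₀, hw⟩ := P.exists_isVacuum h2 hω hnd hψ hL.ge
  exact Module.finrank_eq_nat_card_basis (P.vacuumBasis h2 hω hψ hL hw₀ hw)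

theorem exists_intertwiners [FiniteDimensional F V] (h2 : (2 : F) ≠ 0) (hω : ω.IsAlt)
    (hnd : ω.SeparatingLeft) (hψ : ψ ≠ 1) (U : Subgroup (Symp F V ω)) {L : Submodule F V}
    (hL : ω.orthogonal L = L) (hLU : ∀ g ∈ U, L.map ((g : V ≃ₗ[F] V) : V →ₗ[F] V) = L) :
    ∃ T : Symp F V ω → Module.End ℂ P.carrier, (∀ g : Symp F V ω, P.Intertwines g (T g)) ∧
      (∀ g, IsUnit (T g)) ∧ ∀ g ∈ U, ∀ h ∈ U, T g * T h = T (g * h) := by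
  -- one vacuum per subspace, so that `T g` for `g ∈ U` sends the vacuum of `L` to itself
  choose! vac hvac₀ hvac using fun (L' : Submodule F V) (hL' : L' ≤ ω.orthogonal L') =>
    P.exists_isVacuum h2 hω hnd hψ hL'
  have hiso : ∀ g : Symp F V ω, L.map ((g : V ≃ₗ[F] V) : V →ₗ[F] V) ≤
      ω.orthogonal (L.map ((g : V ≃ₗ[F] V) : V →ₗ[F] V)) := by
    rintro g _ ⟨l, hl, rfl⟩ _ ⟨l', hl', rfl⟩
    exact (g.2 l' l).trans (hL.ge hl l' hl')
  choose T hT using fun g : Symp F V ω => P.exists_apply_π_apply_eq h2 hω hψ hL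
    (hvac₀ L hL.ge) (hvac L hL.ge) (hvac _ (hiso g)) g.2 fun l hl => Submodule.mem_map_of_mem hl
  have hTint : ∀ g : Symp F V ω, P.Intertwines g (T g) := fun g =>
    P.intertwines_of_forall_apply_π_apply (hvac₀ L hL.ge) g.2 (hT g)
  have hTU : ∀ g ∈ U, ∀ v, T g (P.π (v, 0) (vac L)) = P.π ((g : V ≃ₗ[F] V) v, 0) (vac L) :=
    fun g hg v => by rw [hT, hLU g hg]
  refine ⟨T, hTint, fun g => (hTint g).isUnit fun h => hvac₀ _ (hiso g) ?_, fun g hg h hh => ?_⟩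
  · simpa [π_zero, h] using (hT g 0).symm
  · exact LinearMap.ext_on_range (P.span_range_π_apply (hvac₀ L hL.ge)) fun v => by
      rw [Module.End.mul_apply, hTU h hh, hTU g hg, hTU _ (U.mul_mem hg hh)]
      rfl

end HeisenbergRep

end Heisenberg

theorem weil_representation_linearization
    [FiniteDimensional F V]
    (hq : Odd (Fintype.card F))
    (ω : LinearMap.BilinForm F V)
    (halt : ∀ v : V, ω v v = 0)
    (hnd : ∀ v : V, (∀ u : V, ω v u = 0) → v = 0)
    (ψ : AddChar F ℂ) (hψ : ψ ≠ 1)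
    (P : HeisenbergRep F V ω ψ) :
    ∃ ρ : ↥(Symp F V ω) →* (P.carrier ≃ₗ[ℂ] P.carrier),
      ∀ (g : ↥(Symp F V ω)) (v : V) (z : F),
        ((ρ g).toLinearMap ∘ₗ P.π (v, z)) ∘ₗ (ρ g).symm.toLinearMap
          = P.π ((g : V ≃ₗ[F] V) v, z) := by
  have h2 : (2 : F) ≠ 0 := Ring.two_ne_zero fun h => by
    have := FiniteField.even_card_iff_char_two.mp h
    have := Nat.odd_iff.mp hq
    omega
  have : Fact (ringChar F).Prime := ⟨CharP.char_is_prime F _⟩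
  have : Finite V := Module.finite_of_finite F
  have : Finite (V ≃ₗ[F] V) := Finite.of_injective _ DFunLike.coe_injective
  obtain ⟨U⟩ : Nonempty (Sylow (ringChar F) (Symp F V ω)) := inferInstance
  obtain ⟨L, hL, hLU⟩ := exists_orthogonal_eq_self_forall_map_eq halt U.isPGroup'
  obtain ⟨T, hTint, hTunit, hTU⟩ := P.exists_intertwiners h2 halt hnd hψ U hL hLU
  have hcop : (U : Subgroup (Symp F V ω)).index.Coprime (Module.finrank ℂ P.carrier) := by
    obtain ⟨n, -, hn⟩ := FiniteField.card F (ringChar F)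
    rw [P.finrank_eq_card_quotient h2 halt hnd hψ hL, Module.natCard_eq_pow_finrank (K := F),
      Nat.card_eq_fintype_card, hn, ← pow_mul]
    exact ((Nat.Prime.coprime_iff_not_dvd Fact.out).mpr U.not_dvd_index).symm.pow_right _
  obtain ⟨ρ, hρ⟩ := exists_monoidHom_smul_eq_of_coprime_index hTunit
    (fun g h => ((hTint g).mul (hTint h)).exists_eq_smul (hTint (g * h)) (hTunit _)) U hTU hcop
  refine ⟨ρ, fun g v z => ?_⟩
  obtain ⟨a, ha⟩ := hρ g
  exact (ha ▸ (hTint g).smul a : P.Intertwines g (ρ g).toLinearMap).conj_eq v z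

end KRSup
end
end
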